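/- arXiv:2006.00610 — 2 statements merged into one kernel-verified Lean document; each statement's English description precedes it below -/
import Mathlib

section
/- Let l > 0, 0 < l₀ < l, suppose l₀/l is rational, and suppose every positive zero of Φ₀ is simple. Let μ̄₁ < μ̄₂ < ... be the increasing enumeration of the positive zeros of Φ₀, let ε > 0 be sufficiently small and M > 0 as in the approximation result, and for each j with μ̄_j > M let μ_j denote the unique zero of Φ₀ + Φ₁ in (μ̄_j − ε, μ̄_j + ε). Then Φ₀(μ) + Φ₁(μ) ≠ 0 for every μ in the set S = (M, +∞) \ ⋃_j (μ_j − ε, μ_j + ε). -/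
open Filter

/-- Φ₀(μ) = 2 sin(μ(l−l₀)) sin(μl₀) − sin(μl). -/
noncomputable def Phi0 (l l₀ μ : ℝ) : ℝ :=
  2 * Real.sin (μ * (l - l₀)) * Real.sin (μ * l₀) - Real.sin (μ * l)

/-- Φ₁(μ), the lower-order part of the frequency equation. -/
noncomputable def Phi1 (E I ρ m κ l l₀ μ : ℝ) : ℝ :=
  Real.exp (-(μ * l)) *
    (2 * Real.sinh (μ * l) * Real.cos (μ * (l - 2 * l₀))
      - 2 * Real.sinh (μ * l) * Real.cos (μ * l)
      - 2 * Real.cosh (μ * l) * Real.sin (μ * l)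
      + 2 * Real.sin (μ * l) * Real.cosh (μ * (l - 2 * l₀))
      + Real.exp (μ * l) *
          (Real.cos (μ * l) + Real.sin (μ * l) - Real.cos (μ * (l - 2 * l₀)))
      - 8 * ρ / (m * μ) * Real.sinh (μ * l) * Real.sin (μ * l))
  + 2 * κ * ρ * Real.exp (-(μ * l)) / (E * I * m * μ ^ 4) *
      ((Real.cosh (μ * l) - Real.cosh (μ * (l - 2 * l₀))) * Real.sin (μ * l)
        + (Real.cos (μ * l) - Real.cos (μ * (l - 2 * l₀))) * Real.sinh (μ * l))

/-- Simplified (cancelled) form of Φ₁, valid away from `μ = 0`. -/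
noncomputable def Gs (E I ρ m κ l l₀ μ : ℝ) : ℝ :=
  Real.sin (μ*l) * (Real.exp (-(μ*(2*l₀))) + Real.exp (-(μ*(2*(l-l₀)))))
  - Real.exp (-(μ*(2*l))) * (Real.cos (μ*(l-2*l₀)) - Real.cos (μ*l) + Real.sin (μ*l))
  - (4*ρ/m) * (μ⁻¹ * ((1 - Real.exp (-(μ*(2*l)))) * Real.sin (μ*l)))
  + (κ*ρ/(E*I*m)) * ((μ^4)⁻¹ *
      ((1 + Real.exp (-(μ*(2*l))) - Real.exp (-(μ*(2*l₀))) - Real.exp (-(μ*(2*(l-l₀))))) * Real.sin (μ*l)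
        + (Real.cos (μ*l) - Real.cos (μ*(l-2*l₀))) * (1 - Real.exp (-(μ*(2*l))))))

/-- Derivative of `Gs`. -/
noncomputable def Ds (E I ρ m κ l l₀ μ : ℝ) : ℝ :=
  (Real.exp (-(μ*(2*l₀))) + Real.exp (-(μ*(2*(l-l₀))))) * (Real.cos (μ*l) * l)
  + Real.exp (-(μ*(2*l₀))) * (-(2*l₀) * Real.sin (μ*l))
  + Real.exp (-(μ*(2*(l-l₀)))) * (-(2*(l-l₀)) * Real.sin (μ*l))
  + Real.exp (-(μ*(2*l))) * ((2*l) * (Real.cos (μ*(l-2*l₀)) - Real.cos (μ*l) + Real.sin (μ*l))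
      + Real.sin (μ*(l-2*l₀)) * (l-2*l₀) - Real.sin (μ*l) * l - Real.cos (μ*l) * l)
  + (μ^2)⁻¹ * ((4*ρ/m) * ((1 - Real.exp (-(μ*(2*l)))) * Real.sin (μ*l)))
  - μ⁻¹ * ((4*ρ/m) * ((2*l) * Real.exp (-(μ*(2*l))) * Real.sin (μ*l)
      + (1 - Real.exp (-(μ*(2*l)))) * (Real.cos (μ*l) * l)))
  - (μ^5)⁻¹ * ((4*(κ*ρ/(E*I*m))) *
      ((1 + Real.exp (-(μ*(2*l))) - Real.exp (-(μ*(2*l₀))) - Real.exp (-(μ*(2*(l-l₀))))) * Real.sin (μ*l)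
        + (Real.cos (μ*l) - Real.cos (μ*(l-2*l₀))) * (1 - Real.exp (-(μ*(2*l))))))
  + (μ^4)⁻¹ * ((κ*ρ/(E*I*m)) *
      ((-(2*l) * Real.exp (-(μ*(2*l))) + (2*l₀) * Real.exp (-(μ*(2*l₀))) + (2*(l-l₀)) * Real.exp (-(μ*(2*(l-l₀))))) * Real.sin (μ*l)
       + (1 + Real.exp (-(μ*(2*l))) - Real.exp (-(μ*(2*l₀))) - Real.exp (-(μ*(2*(l-l₀))))) * (Real.cos (μ*l) * l)
       + (-(Real.sin (μ*l) * l) + Real.sin (μ*(l-2*l₀)) * (l-2*l₀)) * (1 - Real.exp (-(μ*(2*l))))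
       + (Real.cos (μ*l) - Real.cos (μ*(l-2*l₀))) * ((2*l) * Real.exp (-(μ*(2*l))))))

/-- Derivative of `Phi0`. -/
noncomputable def DPhi0 (l l₀ μ : ℝ) : ℝ :=
  2 * (Real.cos (μ*(l-l₀)) * (l-l₀)) * Real.sin (μ*l₀)
  + 2 * Real.sin (μ*(l-l₀)) * (Real.cos (μ*l₀) * l₀)
  - Real.cos (μ*l) * l

lemma Phi1_eq_Gs (E I ρ m κ l l₀ μ : ℝ) (hE : E ≠ 0) (hI : I ≠ 0) (hm : m ≠ 0)
    (hμ : μ ≠ 0) : Phi1 E I ρ m κ l l₀ μ = Gs E I ρ m κ l l₀ μ := by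
  unfold Phi1 Gs
  rw [show μ*l = μ*l₀ + μ*(l-l₀) by ring, show μ*(l-2*l₀) = μ*(l-l₀) - μ*l₀ by ring,
      show μ*(2*l₀) = μ*l₀ + μ*l₀ by ring,
      show μ*(2*(l-l₀)) = μ*(l-l₀) + μ*(l-l₀) by ring,
      show μ*(2*l) = (μ*l₀ + μ*(l-l₀)) + (μ*l₀ + μ*(l-l₀)) by ring]
  simp only [Real.sinh_eq, Real.cosh_eq, Real.exp_neg, Real.exp_add, Real.exp_sub]
  have h1 := Real.exp_ne_zero (μ*l₀)
  have h2 := Real.exp_ne_zero (μ*(l-l₀))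
  field_simp
  ring

lemma hd_sin (a μ : ℝ) : HasDerivAt (fun x : ℝ => Real.sin (x*a)) (Real.cos (μ*a) * a) μ :=
  ((hasDerivAt_id μ).mul_const a).sin.congr_deriv (by simp only [id_eq]; ring)

lemma hd_cos (a μ : ℝ) : HasDerivAt (fun x : ℝ => Real.cos (x*a)) (-(Real.sin (μ*a) * a)) μ :=
  ((hasDerivAt_id μ).mul_const a).cos.congr_deriv (by simp only [id_eq]; ring)

lemma hd_expneg (a μ : ℝ) : HasDerivAt (fun x : ℝ => Real.exp (-(x*a))) (-a * Real.exp (-(μ*a))) μ :=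
  (((hasDerivAt_id μ).mul_const a).neg.exp).congr_deriv (by simp only [id_eq, Pi.neg_apply]; ring)

set_option maxHeartbeats 2000000 in
lemma hd_Gs (E I ρ m κ l l₀ μ : ℝ) (hμ : μ ≠ 0) :
    HasDerivAt (Gs E I ρ m κ l l₀) (Ds E I ρ m κ l l₀ μ) μ := by
  have hμ4 : μ^4 ≠ 0 := pow_ne_zero _ hμ
  have h4a := (((((hasDerivAt_const μ (1:ℝ)).add (hd_expneg (2*l) μ)).sub (hd_expneg (2*l₀) μ)).sub
      (hd_expneg (2*(l-l₀)) μ)).mul (hd_sin l μ)).add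
      ((((hd_cos l μ).sub (hd_cos (l-2*l₀) μ))).mul
      ((hasDerivAt_const μ (1:ℝ)).sub (hd_expneg (2*l) μ)))
  have h := ((((hd_sin l μ).mul ((hd_expneg (2*l₀) μ).add (hd_expneg (2*(l-l₀)) μ))).sub
      ((hd_expneg (2*l) μ).mul (((hd_cos (l-2*l₀) μ).sub (hd_cos l μ)).add (hd_sin l μ)))).sub
      ((((hasDerivAt_inv hμ).mul (((hasDerivAt_const μ (1:ℝ)).sub (hd_expneg (2*l) μ)).mul
        (hd_sin l μ)))).const_mul (4*ρ/m))).add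
      ((((hasDerivAt_pow 4 μ).inv hμ4).mul h4a).const_mul (κ*ρ/(E*I*m)))
  have e5 : -(((4:ℕ):ℝ) * μ ^ (4-1)) / (μ ^ 4) ^ 2 = -(4 * (μ^5)⁻¹) := by
    field_simp; ring
  rw [e5] at h
  refine h.congr_deriv ?_
  unfold Ds
  simp only [Pi.mul_apply, Pi.sub_apply, Pi.add_apply, Pi.inv_apply]
  ring

lemma hd_Phi0 (l l₀ μ : ℝ) : HasDerivAt (Phi0 l l₀) (DPhi0 l l₀ μ) μ := by
  have h := (((hd_sin (l-l₀) μ).const_mul 2).mul (hd_sin l₀ μ)).sub (hd_sin l μ)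
  exact h

lemma cont_Phi0 (l l₀ : ℝ) : Continuous (Phi0 l l₀) := by
  unfold Phi0; fun_prop

lemma cont_DPhi0 (l l₀ : ℝ) : Continuous (DPhi0 l l₀) := by
  unfold DPhi0; fun_prop

lemma tendsto_zero_bdd_mul {f g : ℝ → ℝ} {C : ℝ} (hg : Tendsto g atTop (nhds 0))
    (hf : ∀ᶠ x in atTop, |f x| ≤ C) : Tendsto (fun x => f x * g x) atTop (nhds 0) := by
  refine squeeze_zero_norm' ?_ (by simpa using hg.abs.const_mul C)
  filter_upwards [hf] with x hx
  rw [Real.norm_eq_abs, abs_mul]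
  exact mul_le_mul_of_nonneg_right hx (abs_nonneg _)

lemma tendsto_zero_mul_bdd {f g : ℝ → ℝ} {C : ℝ} (hf : Tendsto f atTop (nhds 0))
    (hg : ∀ᶠ x in atTop, |g x| ≤ C) : Tendsto (fun x => f x * g x) atTop (nhds 0) := by
  refine squeeze_zero_norm' ?_ (by simpa using hf.abs.const_mul C)
  filter_upwards [hg] with x hx
  rw [Real.norm_eq_abs, abs_mul, mul_comm C]
  exact mul_le_mul_of_nonneg_left hx (abs_nonneg _)

lemma tendsto_exp_neg_mul {a : ℝ} (ha : 0 < a) :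
    Tendsto (fun μ : ℝ => Real.exp (-(μ*a))) atTop (nhds 0) :=
  Real.tendsto_exp_atBot.comp (tendsto_neg_atTop_atBot.comp (Tendsto.atTop_mul_const ha tendsto_id))

lemma tendsto_inv_pow_atTop {n : ℕ} (hn : n ≠ 0) :
    Tendsto (fun μ : ℝ => (μ^n)⁻¹) atTop (nhds 0) := by
  simpa [Pi.inv_def] using (tendsto_pow_atTop (α := ℝ) hn).inv_tendsto_atTop

lemma amul {u v a b : ℝ} (hu : |u| ≤ a) (hv : |v| ≤ b) : |u*v| ≤ a*b := by
  rw [abs_mul]; exact mul_le_mul hu hv (abs_nonneg _) ((abs_nonneg u).trans hu)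

lemma aadd {u v a b : ℝ} (hu : |u| ≤ a) (hv : |v| ≤ b) : |u + v| ≤ a + b :=
  (abs_add_le u v).trans (add_le_add hu hv)

lemma asub {u v a b : ℝ} (hu : |u| ≤ a) (hv : |v| ≤ b) : |u - v| ≤ a + b := by
  rw [sub_eq_add_neg]
  exact (abs_add_le _ _).trans (add_le_add hu ((abs_neg v).le.trans hv))

lemma aneg {u a : ℝ} (hu : |u| ≤ a) : |-u| ≤ a := (abs_neg u).le.trans hu

lemma aexp {x a : ℝ} (hx : 0 ≤ x) (ha : 0 ≤ a) : |Real.exp (-(x*a))| ≤ 1 := by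
  rw [abs_of_pos (Real.exp_pos _)]
  exact Real.exp_le_one_iff.mpr (by nlinarith)

lemma aone_sub_exp {x a : ℝ} (hx : 0 ≤ x) (ha : 0 ≤ a) : |1 - Real.exp (-(x*a))| ≤ 1 := by
  have h1 := Real.exp_pos (-(x*a))
  have h2 : Real.exp (-(x*a)) ≤ 1 := Real.exp_le_one_iff.mpr (by nlinarith)
  rw [abs_le]; constructor <;> linarith

lemma aone : |(1:ℝ)| ≤ 1 := by norm_num

lemma tendsto_Gs (E I ρ m κ l l₀ : ℝ) (hl : 0 < l) (hl₀ : 0 < l₀) (hl₀l : l₀ < l) :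
    Tendsto (Gs E I ρ m κ l l₀) atTop (nhds 0) := by
  have h2l₀ : (0:ℝ) ≤ 2*l₀ := by linarith
  have h2ll₀ : (0:ℝ) ≤ 2*(l-l₀) := by linarith
  have h2l : (0:ℝ) ≤ 2*l := by linarith
  have e1 := tendsto_exp_neg_mul (a := 2*l₀) (by linarith)
  have e2 := tendsto_exp_neg_mul (a := 2*(l-l₀)) (by linarith)
  have e3 := tendsto_exp_neg_mul (a := 2*l) (by linarith)
  have i1 : Tendsto (fun μ : ℝ => μ⁻¹) atTop (nhds 0) := tendsto_inv_atTop_zero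
  have i4 := tendsto_inv_pow_atTop (n := 4) (by norm_num)
  have t1 : Tendsto (fun μ : ℝ => Real.sin (μ*l) * (Real.exp (-(μ*(2*l₀))) + Real.exp (-(μ*(2*(l-l₀)))))) atTop (nhds 0) :=
    tendsto_zero_bdd_mul (by simpa using e1.add e2)
      (Eventually.of_forall fun x => Real.abs_sin_le_one _)
  have t2 : Tendsto (fun μ : ℝ => Real.exp (-(μ*(2*l))) * (Real.cos (μ*(l-2*l₀)) - Real.cos (μ*l) + Real.sin (μ*l))) atTop (nhds 0) := by
    refine tendsto_zero_mul_bdd (C := 1 + 1 + 1) e3 (Eventually.of_forall fun x => ?_)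
    exact aadd (asub (Real.abs_cos_le_one _) (Real.abs_cos_le_one _)) (Real.abs_sin_le_one _)
  have t3 : Tendsto (fun μ : ℝ => (4*ρ/m) * (μ⁻¹ * ((1 - Real.exp (-(μ*(2*l)))) * Real.sin (μ*l)))) atTop (nhds 0) := by
    have inner : Tendsto (fun μ : ℝ => μ⁻¹ * ((1 - Real.exp (-(μ*(2*l)))) * Real.sin (μ*l))) atTop (nhds 0) := by
      refine tendsto_zero_mul_bdd (C := 1*1) i1 ?_
      filter_upwards [eventually_ge_atTop (0:ℝ)] with x hx
      exact amul (aone_sub_exp hx h2l) (Real.abs_sin_le_one _)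
    simpa using inner.const_mul (4*ρ/m)
  have t4 : Tendsto (fun μ : ℝ => (κ*ρ/(E*I*m)) * ((μ^4)⁻¹ *
      ((1 + Real.exp (-(μ*(2*l))) - Real.exp (-(μ*(2*l₀))) - Real.exp (-(μ*(2*(l-l₀))))) * Real.sin (μ*l)
        + (Real.cos (μ*l) - Real.cos (μ*(l-2*l₀))) * (1 - Real.exp (-(μ*(2*l))))))) atTop (nhds 0) := by
    have inner : Tendsto (fun μ : ℝ => (μ^4)⁻¹ *
      ((1 + Real.exp (-(μ*(2*l))) - Real.exp (-(μ*(2*l₀))) - Real.exp (-(μ*(2*(l-l₀))))) * Real.sin (μ*l)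
        + (Real.cos (μ*l) - Real.cos (μ*(l-2*l₀))) * (1 - Real.exp (-(μ*(2*l)))))) atTop (nhds 0) := by
      refine tendsto_zero_mul_bdd (C := (1+1+1+1)*1 + (1+1)*1) i4 ?_
      filter_upwards [eventually_ge_atTop (0:ℝ)] with x hx
      exact aadd (amul (asub (asub (aadd aone (aexp hx h2l)) (aexp hx h2l₀)) (aexp hx h2ll₀)) (Real.abs_sin_le_one _))
        (amul (asub (Real.abs_cos_le_one _) (Real.abs_cos_le_one _)) (aone_sub_exp hx h2l))
    simpa using inner.const_mul (κ*ρ/(E*I*m))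
  have := ((t1.sub t2).sub t3).add t4
  unfold Gs
  simpa using this

lemma tendsto_Ds (E I ρ m κ l l₀ : ℝ) (hl : 0 < l) (hl₀ : 0 < l₀) (hl₀l : l₀ < l) :
    Tendsto (Ds E I ρ m κ l l₀) atTop (nhds 0) := by
  have h2l₀ : (0:ℝ) ≤ 2*l₀ := by linarith
  have h2ll₀ : (0:ℝ) ≤ 2*(l-l₀) := by linarith
  have h2l : (0:ℝ) ≤ 2*l := by linarith
  have e1 := tendsto_exp_neg_mul (a := 2*l₀) (by linarith)
  have e2 := tendsto_exp_neg_mul (a := 2*(l-l₀)) (by linarith)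
  have e3 := tendsto_exp_neg_mul (a := 2*l) (by linarith)
  have i1 : Tendsto (fun μ : ℝ => μ⁻¹) atTop (nhds 0) := tendsto_inv_atTop_zero
  have i2 := tendsto_inv_pow_atTop (n := 2) (by norm_num)
  have i4 := tendsto_inv_pow_atTop (n := 4) (by norm_num)
  have i5 := tendsto_inv_pow_atTop (n := 5) (by norm_num)
  have acl : ∀ x : ℝ, |Real.cos (x*l) * l| ≤ 1*|l| :=
    fun x => amul (Real.abs_cos_le_one _) le_rfl
  have t1 : Tendsto (fun μ : ℝ => (Real.exp (-(μ*(2*l₀))) + Real.exp (-(μ*(2*(l-l₀))))) * (Real.cos (μ*l) * l)) atTop (nhds 0) :=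
    tendsto_zero_mul_bdd (by simpa using e1.add e2) (Eventually.of_forall acl)
  have t2 : Tendsto (fun μ : ℝ => Real.exp (-(μ*(2*l₀))) * (-(2*l₀) * Real.sin (μ*l))) atTop (nhds 0) :=
    tendsto_zero_mul_bdd e1 (Eventually.of_forall fun x => amul (le_refl |(-(2*l₀))|) (Real.abs_sin_le_one _))
  have t3 : Tendsto (fun μ : ℝ => Real.exp (-(μ*(2*(l-l₀)))) * (-(2*(l-l₀)) * Real.sin (μ*l))) atTop (nhds 0) :=
    tendsto_zero_mul_bdd e2 (Eventually.of_forall fun x => amul (le_refl |(-(2*(l-l₀)))|) (Real.abs_sin_le_one _))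
  have t4 : Tendsto (fun μ : ℝ => Real.exp (-(μ*(2*l))) * ((2*l) * (Real.cos (μ*(l-2*l₀)) - Real.cos (μ*l) + Real.sin (μ*l))
      + Real.sin (μ*(l-2*l₀)) * (l-2*l₀) - Real.sin (μ*l) * l - Real.cos (μ*l) * l)) atTop (nhds 0) := by
    refine tendsto_zero_mul_bdd (C := (|2*l| * (1+1+1) + 1*|l-2*l₀|) + 1*|l| + 1*|l|) e3
      (Eventually.of_forall fun x => ?_)
    exact asub (asub (aadd (amul le_rfl (aadd (asub (Real.abs_cos_le_one _) (Real.abs_cos_le_one _)) (Real.abs_sin_le_one _)))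
        (amul (Real.abs_sin_le_one _) le_rfl)) (amul (Real.abs_sin_le_one _) le_rfl)) (amul (Real.abs_cos_le_one _) le_rfl)
  have t5 : Tendsto (fun μ : ℝ => (μ^2)⁻¹ * ((4*ρ/m) * ((1 - Real.exp (-(μ*(2*l)))) * Real.sin (μ*l)))) atTop (nhds 0) := by
    refine tendsto_zero_mul_bdd (C := |4*ρ/m| * (1*1)) i2 ?_
    filter_upwards [eventually_ge_atTop (0:ℝ)] with x hx
    exact amul le_rfl (amul (aone_sub_exp hx h2l) (Real.abs_sin_le_one _))
  have t6 : Tendsto (fun μ : ℝ => μ⁻¹ * ((4*ρ/m) * ((2*l) * Real.exp (-(μ*(2*l))) * Real.sin (μ*l)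
      + (1 - Real.exp (-(μ*(2*l)))) * (Real.cos (μ*l) * l)))) atTop (nhds 0) := by
    refine tendsto_zero_mul_bdd (C := |4*ρ/m| * ((|2*l| * 1*1) + 1*(1*|l|))) i1 ?_
    filter_upwards [eventually_ge_atTop (0:ℝ)] with x hx
    exact amul le_rfl (aadd (amul (amul le_rfl (aexp hx h2l)) (Real.abs_sin_le_one _))
      (amul (aone_sub_exp hx h2l) (acl x)))
  have t7 : Tendsto (fun μ : ℝ => (μ^5)⁻¹ * ((4*(κ*ρ/(E*I*m))) *
      ((1 + Real.exp (-(μ*(2*l))) - Real.exp (-(μ*(2*l₀))) - Real.exp (-(μ*(2*(l-l₀))))) * Real.sin (μ*l)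
        + (Real.cos (μ*l) - Real.cos (μ*(l-2*l₀))) * (1 - Real.exp (-(μ*(2*l))))))) atTop (nhds 0) := by
    refine tendsto_zero_mul_bdd (C := |4*(κ*ρ/(E*I*m))| * ((1+1+1+1)*1 + (1+1)*1)) i5 ?_
    filter_upwards [eventually_ge_atTop (0:ℝ)] with x hx
    exact amul le_rfl (aadd (amul (asub (asub (aadd aone (aexp hx h2l)) (aexp hx h2l₀)) (aexp hx h2ll₀)) (Real.abs_sin_le_one _))
      (amul (asub (Real.abs_cos_le_one _) (Real.abs_cos_le_one _)) (aone_sub_exp hx h2l)))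
  have t8 : Tendsto (fun μ : ℝ => (μ^4)⁻¹ * ((κ*ρ/(E*I*m)) *
      ((-(2*l) * Real.exp (-(μ*(2*l))) + (2*l₀) * Real.exp (-(μ*(2*l₀))) + (2*(l-l₀)) * Real.exp (-(μ*(2*(l-l₀))))) * Real.sin (μ*l)
       + (1 + Real.exp (-(μ*(2*l))) - Real.exp (-(μ*(2*l₀))) - Real.exp (-(μ*(2*(l-l₀))))) * (Real.cos (μ*l) * l)
       + (-(Real.sin (μ*l) * l) + Real.sin (μ*(l-2*l₀)) * (l-2*l₀)) * (1 - Real.exp (-(μ*(2*l))))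
       + (Real.cos (μ*l) - Real.cos (μ*(l-2*l₀))) * ((2*l) * Real.exp (-(μ*(2*l))))))) atTop (nhds 0) := by
    refine tendsto_zero_mul_bdd (C := |κ*ρ/(E*I*m)| *
      (((|(-(2*l))| * 1 + |2*l₀| * 1 + |2*(l-l₀)| * 1)*1 + (1+1+1+1)*(1*|l|)) + (1*|l| + 1*|l-2*l₀|)*1 + (1+1)*(|2*l| * 1))) i4 ?_
    filter_upwards [eventually_ge_atTop (0:ℝ)] with x hx
    refine amul le_rfl (aadd (aadd (aadd ?_ ?_) ?_) ?_)
    · exact amul (aadd (aadd (amul le_rfl (aexp hx h2l)) (amul le_rfl (aexp hx h2l₀))) (amul le_rfl (aexp hx h2ll₀))) (Real.abs_sin_le_one _)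
    · exact amul (asub (asub (aadd aone (aexp hx h2l)) (aexp hx h2l₀)) (aexp hx h2ll₀)) (acl x)
    · exact amul (aadd (aneg (amul (Real.abs_sin_le_one _) le_rfl)) (amul (Real.abs_sin_le_one _) le_rfl)) (aone_sub_exp hx h2l)
    · exact amul (asub (Real.abs_cos_le_one _) (Real.abs_cos_le_one _)) (amul le_rfl (aexp hx h2l))
  have h := ((((((t1.add t2).add t3).add t4).add t5).sub t6).sub t7).add t8
  unfold Ds
  convert h using 2
  norm_num

lemma periodic_Phi0 (l l₀ T : ℝ) (p q : ℤ) (h1 : T * l₀ = (p:ℝ) * (2*Real.pi))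
    (h2 : T * (l - l₀) = (q:ℝ) * (2*Real.pi)) (x : ℝ) :
    Phi0 l l₀ (x + T) = Phi0 l l₀ x ∧ DPhi0 l l₀ (x + T) = DPhi0 l l₀ x := by
  have e0 : (x+T)*l₀ = x*l₀ + (p:ℝ)*(2*Real.pi) := by rw [← h1]; ring
  have e1 : (x+T)*(l-l₀) = x*(l-l₀) + (q:ℝ)*(2*Real.pi) := by rw [← h2]; ring
  have e2 : (x+T)*l = x*l + ((p+q : ℤ):ℝ)*(2*Real.pi) := by
    push_cast; rw [show (x+T)*l = (x+T)*l₀ + (x+T)*(l-l₀) by ring, e0, e1]; push_cast; ring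
  constructor
  · unfold Phi0
    rw [e0, e1, e2, Real.sin_add_int_mul_two_pi, Real.sin_add_int_mul_two_pi,
      Real.sin_add_int_mul_two_pi]
  · unfold DPhi0
    rw [e0, e1, e2, Real.sin_add_int_mul_two_pi, Real.sin_add_int_mul_two_pi,
      Real.cos_add_int_mul_two_pi, Real.cos_add_int_mul_two_pi, Real.cos_add_int_mul_two_pi]

set_option maxHeartbeats 1000000 in
/-- Proposition 2: with `ε` and `M` as in the approximation result (Proposition 1),
denoting by `μⱼ` the unique zero of `Φ₀ + Φ₁` in `(μ̄ⱼ − ε, μ̄ⱼ + ε)` for each `j`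
with `μ̄ⱼ > M`, the function `Φ₀ + Φ₁` has no zero in
`S = (M, +∞) \ ⋃ⱼ (μⱼ − ε, μⱼ + ε)`. -/
theorem noRootOutsideNeighborhoods
    (E I ρ m κ l l₀ : ℝ)
    (hE : 0 < E) (hI : 0 < I) (hρ : 0 < ρ) (hm : 0 < m) (hκ : 0 < κ)
    (hl : 0 < l) (hl₀ : 0 < l₀) (hl₀l : l₀ < l)
    (hrat : ∃ r : ℚ, l₀ / l = (r : ℝ))
    (hsimple : ∀ μ : ℝ, 0 < μ → Phi0 l l₀ μ = 0 → deriv (Phi0 l l₀) μ ≠ 0)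
    (μb : ℕ → ℝ) (hmono : StrictMono μb) (hpos : ∀ j, 0 < μb j)
    (hzero : ∀ j, Phi0 l l₀ (μb j) = 0)
    (hall : ∀ x : ℝ, 0 < x → Phi0 l l₀ x = 0 → ∃ j, μb j = x) :
    ∀ ε : ℝ, 0 < ε → (∀ j, ε < (μb (j + 1) - μb j) / 2) →
      ∃ M : ℝ, 0 < M ∧ ∃ μ : ℕ → ℝ,
        (∀ j, M < μb j →
          μ j ∈ Set.Ioo (μb j - ε) (μb j + ε) ∧
          Phi0 l l₀ (μ j) + Phi1 E I ρ m κ l l₀ (μ j) = 0 ∧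
          (∀ x ∈ Set.Ioo (μb j - ε) (μb j + ε),
            Phi0 l l₀ x + Phi1 E I ρ m κ l l₀ x = 0 → x = μ j)) ∧
        ∀ x ∈ Set.Ioi M \ ⋃ j ∈ {j : ℕ | M < μb j}, Set.Ioo (μ j - ε) (μ j + ε),
          Phi0 l l₀ x + Phi1 E I ρ m κ l l₀ x ≠ 0 := by
  intro ε hε hgap
  classical
  obtain ⟨r, hr⟩ := hrat
  have hlne : l ≠ 0 := ne_of_gt hl
  have hπ := Real.pi_pos
  have hden : (0:ℝ) < (r.den : ℝ) := by exact_mod_cast r.pos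
  set T : ℝ := 2*Real.pi*(r.den:ℝ)/l with hTdef
  have hT : 0 < T := by positivity
  have hrl : (r:ℝ) * l = l₀ := by rw [← hr]; field_simp
  have hrdn : (r:ℝ) * (r.den:ℝ) = (r.num:ℝ) := by
    rw [Rat.cast_def]; field_simp
  have h1 : T * l₀ = (r.num:ℝ) * (2*Real.pi) := by
    rw [← hrl, hTdef]
    field_simp
    linear_combination hrdn
  have hTl : T * l = (((r.den:ℤ)):ℝ) * (2*Real.pi) := by
    rw [hTdef]; push_cast; field_simp
  have h2 : T * (l - l₀) = ((((r.den:ℤ) - r.num : ℤ)):ℝ) * (2*Real.pi) := by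
    push_cast
    linear_combination hTl - h1
  have hper : ∀ x, Phi0 l l₀ (x+T) = Phi0 l l₀ x :=
    fun x => (periodic_Phi0 l l₀ T r.num ((r.den:ℤ) - r.num) h1 h2 x).1
  have hper' : ∀ x, DPhi0 l l₀ (x+T) = DPhi0 l l₀ x :=
    fun x => (periodic_Phi0 l l₀ T r.num ((r.den:ℤ) - r.num) h1 h2 x).2
  have hpern : ∀ (n:ℕ) (x:ℝ), Phi0 l l₀ (x + n*T) = Phi0 l l₀ x := by
    intro n
    induction n with
    | zero => intro x; norm_num
    | succ k ih =>
      intro x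
      have e : x + ((k:ℕ)+1:ℕ)*T = (x + T) + k*T := by push_cast; ring
      rw [e, ih, hper]
  have hpern' : ∀ (n:ℕ) (x:ℝ), DPhi0 l l₀ (x + n*T) = DPhi0 l l₀ x := by
    intro n
    induction n with
    | zero => intro x; norm_num
    | succ k ih =>
      intro x
      have e : x + ((k:ℕ)+1:ℕ)*T = (x + T) + k*T := by push_cast; ring
      rw [e, ih, hper']
  set Z : Set ℝ := {x : ℝ | Phi0 l l₀ x = 0} with hZdef
  have hZc : IsClosed Z := isClosed_eq (cont_Phi0 l l₀) continuous_const
  have hZne : Z.Nonempty := ⟨μb 0, hzero 0⟩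
  have hZshift : ∀ w ∈ Z, ∀ n:ℕ, w + n*T ∈ Z := by
    intro w hw n
    have : Phi0 l l₀ (w + n*T) = Phi0 l l₀ w := hpern n w
    simpa [hZdef, this] using hw
  set a := μb 0 with hadef
  have ha0 : 0 < a := hpos 0
  have hF00 : Phi0 l l₀ 0 = 0 := by simp [Phi0]
  have hunb : ∀ B : ℝ, ∃ j, B < μb j := by
    intro B
    obtain ⟨n, hn⟩ := exists_nat_gt (max B 0 / T)
    have hnT : max B 0 < n*T := by
      rw [div_lt_iff₀ hT] at hn; linarith
    have hzn : Phi0 l l₀ ((n:ℝ)*T) = 0 := by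
      have := hpern n 0
      rw [zero_add] at this
      rw [this]; exact hF00
    obtain ⟨j, hj⟩ := hall ((n:ℝ)*T) (lt_of_le_of_lt (le_max_right B 0) hnT) hzn
    exact ⟨j, by rw [hj]; exact lt_of_le_of_lt (le_max_left B 0) hnT⟩
  have hwin : ∀ x:ℝ, a ≤ x → ∃ n:ℕ, a ≤ x - n*T ∧ x - n*T < a + T := by
    intro x hx
    have h0 : 0 ≤ ⌊(x - a)/T⌋ := Int.floor_nonneg.mpr (div_nonneg (by linarith) hT.le)
    refine ⟨(⌊(x - a)/T⌋).toNat, ?_, ?_⟩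
    · have hge := Int.sub_floor_div_mul_nonneg (x - a) hT
      have hcast : (((⌊(x - a)/T⌋).toNat : ℕ):ℝ) = ((⌊(x - a)/T⌋ : ℤ):ℝ) := by
        exact_mod_cast congrArg (fun z : ℤ => (z:ℝ)) (Int.toNat_of_nonneg h0)
      rw [hcast]; linarith
    · have hlt := Int.sub_floor_div_mul_lt (x - a) hT
      have hcast : (((⌊(x - a)/T⌋).toNat : ℕ):ℝ) = ((⌊(x - a)/T⌋ : ℤ):ℝ) := by
        exact_mod_cast congrArg (fun z : ℤ => (z:ℝ)) (Int.toNat_of_nonneg h0)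
      rw [hcast]; linarith
  -- minimum of |DPhi0| on zeros in one period
  have hK1c : IsCompact (Z ∩ Set.Icc a (a+T)) := isCompact_Icc.inter_left hZc
  have hK1ne : (Z ∩ Set.Icc a (a+T)).Nonempty :=
    ⟨a, hzero 0, ⟨le_refl a, by linarith⟩⟩
  obtain ⟨z₀, hz₀K, hz₀min⟩ := hK1c.exists_isMinOn hK1ne ((cont_DPhi0 l l₀).abs.continuousOn)
  set d := |DPhi0 l l₀ z₀| with hddef
  have hd0 : 0 < d := by
    have hz₀Z : Phi0 l l₀ z₀ = 0 := hz₀K.1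
    have hz₀pos : 0 < z₀ := lt_of_lt_of_le ha0 hz₀K.2.1
    have hne := hsimple z₀ hz₀pos hz₀Z
    rw [(hd_Phi0 l l₀ z₀).deriv] at hne
    exact abs_pos.mpr hne
  have hdZ : ∀ z ∈ Z, a ≤ z → d ≤ |DPhi0 l l₀ z| := by
    intro z hz hza
    obtain ⟨n, hn1, hn2⟩ := hwin z hza
    have e : (z - n*T) + n*T = z := by ring
    have hFz : Phi0 l l₀ (z - n*T) = Phi0 l l₀ z := by
      conv_rhs => rw [← e]
      rw [hpern]
    have hF'z : DPhi0 l l₀ (z - n*T) = DPhi0 l l₀ z := by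
      conv_rhs => rw [← e]
      rw [hpern']
    have hmem : z - n*T ∈ Z ∩ Set.Icc a (a+T) := by
      refine ⟨?_, ⟨hn1, hn2.le⟩⟩
      show Phi0 l l₀ (z - n*T) = 0
      rw [hFz]; exact hz
    have := hz₀min hmem
    simpa [hF'z] using this
  -- uniform continuity radius
  have huc := (isCompact_Icc (a := a-1) (b := a+T+1)).uniformContinuousOn_of_continuous
    ((cont_DPhi0 l l₀).continuousOn)
  rw [Metric.uniformContinuousOn_iff] at huc
  obtain ⟨δ, hδ, hucd⟩ := huc (d/2) (by positivity)
  set θ : ℝ := min δ 1 / 2 with hθdef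
  have hθpos : 0 < θ := by positivity
  have hθδ : θ < δ := by
    have : min δ 1 ≤ δ := min_le_left _ _
    simp only [hθdef]; linarith
  have hθ1 : θ ≤ 1/2 := by
    have : min δ 1 ≤ 1 := min_le_right _ _
    simp only [hθdef]; linarith
  have hθZ : ∀ z ∈ Z, a ≤ z → ∀ x:ℝ, |x - z| ≤ θ → |DPhi0 l l₀ x - DPhi0 l l₀ z| < d/2 := by
    intro z hz hza x hxz
    obtain ⟨n, hn1, hn2⟩ := hwin z hza
    have ey : (z - n*T) + n*T = z := by ring
    have ex : (x - n*T) + n*T = x := by ring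
    have hyK : z - n*T ∈ Set.Icc (a-1) (a+T+1) := ⟨by linarith, by linarith⟩
    have hxx : x - n*T - (z - n*T) = x - z := by ring
    have hxK : x - n*T ∈ Set.Icc (a-1) (a+T+1) := by
      obtain ⟨hL, hR⟩ := abs_le.mp hxz
      constructor <;> linarith
    have hdist : dist (x - n*T) (z - n*T) < δ := by
      rw [Real.dist_eq, hxx]
      exact lt_of_le_of_lt hxz hθδ
    have := hucd _ hxK _ hyK hdist
    rw [Real.dist_eq] at this
    have e1 : DPhi0 l l₀ (x - n*T) = DPhi0 l l₀ x := by
      conv_rhs => rw [← ex]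
      rw [hpern']
    have e2 : DPhi0 l l₀ (z - n*T) = DPhi0 l l₀ z := by
      conv_rhs => rw [← ey]
      rw [hpern']
    rwa [e1, e2] at this
  set θ' : ℝ := min θ (min ε a) / 2 with hθ'def
  have hθ'pos : 0 < θ' := by
    have : 0 < min θ (min ε a) := lt_min hθpos (lt_min hε ha0)
    simp only [hθ'def]; linarith
  have hθ'θ : θ' ≤ θ := by
    have : min θ (min ε a) ≤ θ := min_le_left _ _
    simp only [hθ'def]; linarith
  have hθ'ε : θ' ≤ ε/2 := by
    have : min θ (min ε a) ≤ ε := (min_le_right _ _).trans (min_le_left _ _)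
    simp only [hθ'def]; linarith
  have hθ'a : θ' ≤ a/2 := by
    have : min θ (min ε a) ≤ a := (min_le_right _ _).trans (min_le_right _ _)
    simp only [hθ'def]; linarith
  have hθ'1 : θ' ≤ 1 := by linarith [hθ'θ, hθ1]
  -- minimum of |Phi0| away from zeros
  set K2 : Set ℝ := Set.Icc a (a+T) ∩ {x : ℝ | θ' ≤ Metric.infDist x Z} with hK2def
  have hK2closed : IsClosed K2 :=
    isClosed_Icc.inter (isClosed_le continuous_const (Metric.continuous_infDist_pt Z))
  have hK2cpt : IsCompact K2 := isCompact_Icc.of_isClosed_subset hK2closed Set.inter_subset_left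
  have hmu01 : μb 0 < μb 1 := hmono (by norm_num)
  have hgap0 := hgap 0
  have hmu1T : μb 1 ≤ a + T := by
    have hzT : Phi0 l l₀ (a+T) = 0 := by rw [hper a]; exact hzero 0
    obtain ⟨k, hk⟩ := hall (a+T) (by linarith) hzT
    have hk0 : k ≠ 0 := by
      intro h
      rw [h] at hk
      have : a = a + T := hk
      linarith
    have : μb 1 ≤ μb k := hmono.monotone (Nat.one_le_iff_ne_zero.mpr hk0)
    linarith [hk.le, hk.ge, this]
  set xstar : ℝ := (μb 0 + μb 1)/2 with hxsdef
  have hxstarK2 : xstar ∈ K2 := by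
    constructor
    · exact ⟨by simp only [hxsdef]; linarith, by simp only [hxsdef]; linarith⟩
    · show θ' ≤ Metric.infDist xstar Z
      by_contra hlt
      push_neg at hlt
      obtain ⟨w, hwZ, hwd⟩ := (Metric.infDist_lt_iff hZne).mp hlt
      rw [Real.dist_eq] at hwd
      have habs := abs_lt.mp hwd
      have hwpos : 0 < w := by
        have hxa : a ≤ xstar := by simp only [hxsdef]; linarith
        linarith [hθ'a, ha0, habs.2]
      obtain ⟨k, hk⟩ := hall w hwpos hwZ
      have hge : (μb 1 - μb 0)/2 ≤ |xstar - w| := by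
        rw [← hk]
        rcases Nat.eq_zero_or_pos k with hk0 | hkpos
        · rw [hk0]
          rw [abs_of_nonneg (by simp only [hxsdef]; linarith)]
          simp only [hxsdef]; linarith
        · have h1 : μb 1 ≤ μb k := hmono.monotone hkpos
          have : μb k - xstar ≤ |xstar - μb k| := by
            rw [abs_sub_comm]; exact le_abs_self _
          simp only [hxsdef] at this ⊢
          linarith
      linarith [hθ'ε]
  obtain ⟨z₁, hz₁K, hz₁min⟩ := hK2cpt.exists_isMinOn ⟨xstar, hxstarK2⟩
    ((cont_Phi0 l l₀).abs.continuousOn)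
  set c := |Phi0 l l₀ z₁| with hcdef
  have hc0 : 0 < c := by
    refine abs_pos.mpr ?_
    intro h
    have hmem : z₁ ∈ Z := h
    have := Metric.infDist_zero_of_mem hmem
    have h2 : θ' ≤ Metric.infDist z₁ Z := hz₁K.2
    rw [this] at h2
    linarith
  have hcZ : ∀ x:ℝ, a ≤ x → θ' ≤ Metric.infDist x Z → c ≤ |Phi0 l l₀ x| := by
    intro x hx hinf
    obtain ⟨n, hn1, hn2⟩ := hwin x hx
    have ex : (x - n*T) + n*T = x := by ring
    have hyinf : θ' ≤ Metric.infDist (x - n*T) Z := by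
      by_contra hlt
      push_neg at hlt
      obtain ⟨w, hwZ, hwd⟩ := (Metric.infDist_lt_iff hZne).mp hlt
      have hw' : w + n*T ∈ Z := hZshift w hwZ n
      have h1 : Metric.infDist x Z ≤ dist x (w + n*T) := Metric.infDist_le_dist_of_mem hw'
      have h2 : dist x (w+n*T) = dist (x - n*T) w := by
        rw [Real.dist_eq, Real.dist_eq]
        congr 1
        ring
      rw [h2, Real.dist_eq] at h1
      rw [Real.dist_eq] at hwd
      linarith
    have hyF : Phi0 l l₀ (x - n*T) = Phi0 l l₀ x := by
      conv_rhs => rw [← ex]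
      rw [hpern]
    have := hz₁min ⟨⟨hn1, hn2.le⟩, hyinf⟩
    simpa [hyF] using this
  have hloc : ∀ x:ℝ, a ≤ x → 1 ≤ x → |Phi0 l l₀ x| < c → ∃ k, |x - μb k| < θ' := by
    intro x hxa hx1 hFx
    have hinf : Metric.infDist x Z < θ' := by
      by_contra h
      push_neg at h
      exact absurd (hcZ x hxa h) (not_le.mpr hFx)
    obtain ⟨w, hwZ, hwd⟩ := (Metric.infDist_lt_iff hZne).mp hinf
    rw [Real.dist_eq] at hwd
    have habs := abs_lt.mp hwd
    have hwpos : 0 < w := by linarith [hθ'1]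
    obtain ⟨k, hk⟩ := hall w hwpos hwZ
    exact ⟨k, by rw [hk]; exact hwd⟩
  -- tail bounds on Gs and Ds
  have hGt := tendsto_Gs E I ρ m κ l l₀ hl hl₀ hl₀l
  have hDt := tendsto_Ds E I ρ m κ l l₀ hl hl₀ hl₀l
  set bnd := min c (d*θ'/2) with hbnddef
  have hbnd0 : 0 < bnd := lt_min hc0 (by positivity)
  have hbndc : bnd ≤ c := min_le_left _ _
  have hbndd : bnd ≤ d*θ'/2 := min_le_right _ _
  have hev1 : ∃ n:ℝ, ∀ b:ℝ, n ≤ b → |Gs E I ρ m κ l l₀ b| < bnd := by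
    simpa [Real.dist_eq] using Metric.tendsto_nhds.mp hGt bnd hbnd0
  have hev2 : ∃ n:ℝ, ∀ b:ℝ, n ≤ b → |Ds E I ρ m κ l l₀ b| < d/2 := by
    simpa [Real.dist_eq] using Metric.tendsto_nhds.mp hDt (d/2) (by positivity)
  obtain ⟨N₁, hN₁⟩ := hev1
  obtain ⟨N₂, hN₂⟩ := hev2
  set N : ℝ := max (max N₁ N₂) (max a 1) with hNdef
  have hN₁N : N₁ ≤ N := le_trans (le_max_left _ _) (le_max_left _ _)
  have hN₂N : N₂ ≤ N := le_trans (le_max_right _ _) (le_max_left _ _)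
  have haN : a ≤ N := le_trans (le_max_left _ _) (le_max_right _ _)
  have h1N : 1 ≤ N := le_trans (le_max_right _ _) (le_max_right _ _)
  obtain ⟨j₀, hj₀⟩ := hunb N
  set M := μb j₀ + ε with hMdef
  have hM0 : 0 < M := by have := hpos j₀; simp only [hMdef]; linarith
  have hMN : N < M := by simp only [hMdef]; linarith
  have hjM : ∀ j, M < μb j ↔ j₀ < j := by
    intro j
    constructor
    · intro h
      by_contra hle
      push_neg at hle
      have := hmono.monotone hle
      simp only [hMdef] at h
      linarith
    · intro h
      have h1 := hgap j₀
      have h2 : μb (j₀+1) ≤ μb j := hmono.monotone h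
      simp only [hMdef]
      linarith
  have hsep : ∀ k j:ℕ, k ≠ j → 2*ε < |μb k - μb j| := by
    intro k j hkj
    rcases lt_or_gt_of_ne hkj with h | h
    · have h1 := hgap k
      have h2 : μb (k+1) ≤ μb j := hmono.monotone h
      rw [abs_sub_comm, abs_of_nonneg (by linarith [hmono h])]
      linarith
    · have h1 := hgap j
      have h2 : μb (j+1) ≤ μb k := hmono.monotone h
      rw [abs_of_nonneg (by linarith [hmono h])]
      linarith
  -- the perturbed function
  set H : ℝ → ℝ := fun x => Phi0 l l₀ x + Gs E I ρ m κ l l₀ x with hHdef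
  have hHP : ∀ x:ℝ, x ≠ 0 → Phi0 l l₀ x + Phi1 E I ρ m κ l l₀ x = H x := by
    intro x hx
    simp only [hHdef]
    rw [Phi1_eq_Gs E I ρ m κ l l₀ x (ne_of_gt hE) (ne_of_gt hI) (ne_of_gt hm) hx]
  have hHcontAt : ∀ x:ℝ, x ≠ 0 → ContinuousAt H x := by
    intro x hx
    exact ((hd_Phi0 l l₀ x).continuousAt).add ((hd_Gs E I ρ m κ l l₀ x hx).continuousAt)
  have hHd : ∀ x:ℝ, x ≠ 0 →
      HasDerivAt H (DPhi0 l l₀ x + Ds E I ρ m κ l l₀ x) x := by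
    intro x hx
    exact (hd_Phi0 l l₀ x).add (hd_Gs E I ρ m κ l l₀ x hx)
  -- existence and uniqueness near each large zero
  have hex : ∀ j, M < μb j → ∃ x, x ∈ Set.Ioo (μb j - ε) (μb j + ε) ∧ H x = 0 ∧
      (∀ y ∈ Set.Ioo (μb j - ε) (μb j + ε), H y = 0 → y = x) := by
    intro j hMj
    have hzZ : μb j ∈ Z := hzero j
    have hza : a ≤ μb j := hmono.monotone (Nat.zero_le j)
    have hzN : N < μb j := by simp only [hMdef] at hMj; linarith
    have hzM : μb j₀ < μb j - ε := by simp only [hMdef] at hMj; linarith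
    have hθ'ne : θ' ≠ 0 := ne_of_gt hθ'pos
    have hdz : d ≤ |DPhi0 l l₀ (μb j)| := hdZ _ hzZ hza
    -- mean value theorem on both sides
    obtain ⟨ξp, hξpI, hξp⟩ := exists_hasDerivAt_eq_slope (Phi0 l l₀) (DPhi0 l l₀)
      (show μb j < μb j + θ' by linarith) ((cont_Phi0 l l₀).continuousOn)
      (fun x _ => hd_Phi0 l l₀ x)
    obtain ⟨ξm, hξmI, hξm⟩ := exists_hasDerivAt_eq_slope (Phi0 l l₀) (DPhi0 l l₀)
      (show μb j - θ' < μb j by linarith) ((cont_Phi0 l l₀).continuousOn)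
      (fun x _ => hd_Phi0 l l₀ x)
    have hFz : Phi0 l l₀ (μb j) = 0 := hzero j
    have hFp : Phi0 l l₀ (μb j + θ') = DPhi0 l l₀ ξp * θ' := by
      have e : μb j + θ' - μb j = θ' := by ring
      rw [e, hFz, sub_zero, eq_div_iff hθ'ne] at hξp
      linarith
    have hFm : Phi0 l l₀ (μb j - θ') = -(DPhi0 l l₀ ξm * θ') := by
      have e : μb j - (μb j - θ') = θ' := by ring
      rw [e, hFz, zero_sub, eq_div_iff hθ'ne] at hξm
      linarith
    have hξpd : |DPhi0 l l₀ ξp - DPhi0 l l₀ (μb j)| < d/2 := by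
      refine hθZ _ hzZ hza ξp ?_
      rw [abs_of_nonneg (by linarith [hξpI.1])]
      linarith [hξpI.2, hθ'θ]
    have hξmd : |DPhi0 l l₀ ξm - DPhi0 l l₀ (μb j)| < d/2 := by
      refine hθZ _ hzZ hza ξm ?_
      rw [abs_of_nonpos (by linarith [hξmI.2])]
      linarith [hξmI.1, hθ'θ]
    have hGp : |Gs E I ρ m κ l l₀ (μb j + θ')| < bnd := hN₁ _ (by linarith)
    have hGm : |Gs E I ρ m κ l l₀ (μb j - θ')| < bnd := by
      refine hN₁ _ ?_
      have : θ' < ε := by linarith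
      linarith
    have hcontH : ContinuousOn H (Set.Icc (μb j - θ') (μb j + θ')) := by
      intro w hw
      have hwpos : 0 < w := by
        have h1 := hw.1
        linarith [hθ'a, ha0, hza]
      exact (hHcontAt w (ne_of_gt hwpos)).continuousWithinAt
    have habsGp := abs_lt.mp hGp
    have habsGm := abs_lt.mp hGm
    have habsp := abs_lt.mp hξpd
    have habsm := abs_lt.mp hξmd
    -- obtain a zero of H in the θ'-interval
    have hxex : ∃ x ∈ Set.Ioo (μb j - θ') (μb j + θ'), H x = 0 := by
      rcases lt_or_ge 0 (DPhi0 l l₀ (μb j)) with hsgn | hsgn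
      · have hdpos : d ≤ DPhi0 l l₀ (μb j) := by
          rwa [abs_of_pos hsgn] at hdz
        have hHp : 0 < H (μb j + θ') := by
          simp only [hHdef]
          have : d/2 * θ' < DPhi0 l l₀ ξp * θ' := by
            have : d/2 < DPhi0 l l₀ ξp := by linarith
            exact mul_lt_mul_of_pos_right this hθ'pos
          rw [hFp] at *
          linarith [hbndd]
        have hHm : H (μb j - θ') < 0 := by
          simp only [hHdef]
          have : d/2 * θ' < DPhi0 l l₀ ξm * θ' := by
            have : d/2 < DPhi0 l l₀ ξm := by linarith
            exact mul_lt_mul_of_pos_right this hθ'pos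
          rw [hFm] at *
          linarith [hbndd]
        have hmem0 : (0:ℝ) ∈ Set.Ioo (H (μb j - θ')) (H (μb j + θ')) := ⟨hHm, hHp⟩
        obtain ⟨x, hxI, hx0⟩ := intermediate_value_Ioo (by linarith : μb j - θ' ≤ μb j + θ')
          hcontH hmem0
        exact ⟨x, hxI, hx0⟩
      · have hdneg : DPhi0 l l₀ (μb j) ≤ -d := by
          rw [abs_of_nonpos hsgn] at hdz
          linarith
        have hHp : H (μb j + θ') < 0 := by
          simp only [hHdef]
          have : DPhi0 l l₀ ξp * θ' < -(d/2) * θ' := by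
            have : DPhi0 l l₀ ξp < -(d/2) := by linarith
            exact mul_lt_mul_of_pos_right this hθ'pos
          rw [hFp] at *
          linarith [hbndd]
        have hHm : 0 < H (μb j - θ') := by
          simp only [hHdef]
          have : DPhi0 l l₀ ξm * θ' < -(d/2) * θ' := by
            have : DPhi0 l l₀ ξm < -(d/2) := by linarith
            exact mul_lt_mul_of_pos_right this hθ'pos
          rw [hFm] at *
          linarith [hbndd]
        have hmem0 : (0:ℝ) ∈ Set.Ioo (H (μb j + θ')) (H (μb j - θ')) := ⟨hHp, hHm⟩
        obtain ⟨x, hxI, hx0⟩ := intermediate_value_Ioo' (by linarith : μb j - θ' ≤ μb j + θ')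
          hcontH hmem0
        exact ⟨x, hxI, hx0⟩
    obtain ⟨x, hxI, hx0⟩ := hxex
    -- localize any zero of H in the ε-interval to the θ'-interval
    have hlocal : ∀ y ∈ Set.Ioo (μb j - ε) (μb j + ε), H y = 0 →
        y ∈ Set.Ioo (μb j - θ') (μb j + θ') := by
      intro y hyI hy0
      have hyN : N < y := by linarith [hyI.1, hzM, hj₀]
      have hyFsmall : |Phi0 l l₀ y| < c := by
        have he : Phi0 l l₀ y = - Gs E I ρ m κ l l₀ y := by
          simp only [hHdef] at hy0
          linarith
        rw [he, abs_neg]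
        exact lt_of_lt_of_le (hN₁ y (by linarith)) hbndc
      obtain ⟨k, hky⟩ := hloc y (by linarith) (by linarith) hyFsmall
      have hkj : k = j := by
        by_contra hne
        have hs := hsep k j hne
        have ht : |μb k - μb j| ≤ |μb k - y| + |y - μb j| := abs_sub_le _ _ _
        have h1 : |μb k - y| < θ' := by rwa [abs_sub_comm] at hky
        have h2 : |y - μb j| < ε := by
          rw [abs_lt]
          exact ⟨by linarith [hyI.1], by linarith [hyI.2]⟩
        linarith [hθ'ε]
      rw [hkj] at hky
      have := abs_lt.mp hky
      exact ⟨by linarith, by linarith⟩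
    refine ⟨x, ⟨by linarith [hxI.1, hθ'ε], by linarith [hxI.2, hθ'ε]⟩, hx0, ?_⟩
    intro y hyI hy0
    have hyθ : y ∈ Set.Ioo (μb j - θ') (μb j + θ') := hlocal y hyI hy0
    by_contra hne
    -- Rolle between y and x
    have hxmin : μb j - θ' < min y x := lt_min hyθ.1 hxI.1
    have hxmax : max y x < μb j + θ' := max_lt hyθ.2 hxI.2
    have huv : min y x < max y x := min_lt_max.mpr hne
    have hposuv : 0 < min y x := by
      linarith [hθ'a, ha0, hza, hxmin]
    have hHu : H (min y x) = 0 := by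
      rcases le_total y x with hcase | hcase
      · rw [min_eq_left hcase]; exact hy0
      · rw [min_eq_right hcase]; exact hx0
    have hHv : H (max y x) = 0 := by
      rcases le_total y x with hcase | hcase
      · rw [max_eq_right hcase]; exact hx0
      · rw [max_eq_left hcase]; exact hy0
    have hcont2 : ContinuousOn H (Set.Icc (min y x) (max y x)) := by
      intro w hw
      have : 0 < w := lt_of_lt_of_le hposuv hw.1
      exact (hHcontAt w (ne_of_gt this)).continuousWithinAt
    obtain ⟨ξ, hξI, hξ0⟩ := exists_deriv_eq_zero huv hcont2 (hHu.trans hHv.symm)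
    have hξpos : 0 < ξ := lt_trans hposuv hξI.1
    have hξN : N < ξ := by
      have h1 : μb j - θ' < ξ := lt_trans hxmin hξI.1
      have : θ' < ε := by linarith
      linarith [hzM, hj₀]
    have hξz : |ξ - μb j| ≤ θ := by
      have h1 : μb j - θ' < ξ := lt_trans hxmin hξI.1
      have h2 : ξ < μb j + θ' := lt_trans hξI.2 hxmax
      rw [abs_le]
      exact ⟨by linarith, by linarith⟩
    have hd1 : |DPhi0 l l₀ ξ - DPhi0 l l₀ (μb j)| < d/2 := hθZ _ hzZ hza ξ hξz
    have hd2 : |Ds E I ρ m κ l l₀ ξ| < d/2 := hN₂ ξ (by linarith)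
    have hderiv : deriv H ξ = DPhi0 l l₀ ξ + Ds E I ρ m κ l l₀ ξ :=
      (hHd ξ (ne_of_gt hξpos)).deriv
    rw [hderiv] at hξ0
    have h3 : |DPhi0 l l₀ (μb j)| - |DPhi0 l l₀ ξ| ≤ |DPhi0 l l₀ ξ - DPhi0 l l₀ (μb j)| := by
      rw [abs_sub_comm]
      exact abs_sub_abs_le_abs_sub _ _
    have h4 : |DPhi0 l l₀ ξ| = |Ds E I ρ m κ l l₀ ξ| := by
      rw [show DPhi0 l l₀ ξ = -(Ds E I ρ m κ l l₀ ξ) from by linarith, abs_neg]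
    linarith
  -- package the choice function
  set μfun : ℕ → ℝ := fun j => if h : M < μb j then (hex j h).choose else μb j with hμfun
  refine ⟨M, hM0, μfun, fun j hj => ?_, fun x hx => ?_⟩
  · obtain ⟨hmem, hHz, huniq⟩ := (hex j hj).choose_spec
    have hμj : μfun j = (hex j hj).choose := by simp only [hμfun]; rw [dif_pos hj]
    rw [hμj]
    have hzM : μb j₀ < μb j - ε := by simp only [hMdef] at hj; linarith
    have hNj₀ : (1:ℝ) ≤ N := h1N
    refine ⟨hmem, ?_, ?_⟩
    · have hxpos : (hex j hj).choose ≠ 0 := by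
        have := hmem.1
        have : (0:ℝ) < (hex j hj).choose := by linarith [hj₀]
        exact ne_of_gt this
      rw [hHP _ hxpos]
      exact hHz
    · intro y hy h0
      have hypos : y ≠ 0 := by
        have := hy.1
        have : (0:ℝ) < y := by linarith [hj₀]
        exact ne_of_gt this
      refine huniq y hy ?_
      rw [← hHP y hypos]
      exact h0
  · obtain ⟨hx1, hx2⟩ := hx
    rw [Set.mem_Ioi] at hx1
    intro hzero'
    have hxpos : (0:ℝ) < x := lt_trans hM0 hx1
    have hHx : H x = 0 := by rw [← hHP x (ne_of_gt hxpos)]; exact hzero'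
    have hxN : N < x := lt_trans hMN hx1
    have hxFsmall : |Phi0 l l₀ x| < c := by
      have he : Phi0 l l₀ x = - Gs E I ρ m κ l l₀ x := by
        simp only [hHdef] at hHx
        linarith
      rw [he, abs_neg]
      exact lt_of_lt_of_le (hN₁ x (by linarith)) hbndc
    obtain ⟨k, hk⟩ := hloc x (by linarith) (by linarith) hxFsmall
    have habsk := abs_lt.mp hk
    have hMk : M < μb k := by
      refine (hjM k).mpr ?_
      refine (hmono.lt_iff_lt).mp ?_
      have h1 : μb j₀ < μb k := by
        simp only [hMdef] at hx1
        have : θ' < ε := by linarith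
        linarith
      exact h1
    have hxIoo : x ∈ Set.Ioo (μb k - ε) (μb k + ε) := by
      have : θ' < ε := by linarith
      exact ⟨by linarith, by linarith⟩
    obtain ⟨hmemk, hHzk, hunik⟩ := (hex k hMk).choose_spec
    have hxeq : x = (hex k hMk).choose := hunik x hxIoo hHx
    apply hx2
    refine Set.mem_biUnion hMk ?_
    have hμk : μfun k = (hex k hMk).choose := by simp only [hμfun]; rw [dif_pos hMk]
    rw [hμk, ← hxeq]
    exact ⟨by linarith, by linarith⟩
end

section
/- The derivative of Φ₁ tends to 0 as μ tends to +∞, i.e. lim_{μ→+∞} Φ₁'(μ) = 0. -/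
open Filter Real

lemma atom_tendsto (K : ℝ) (f t : ℝ → ℝ) (hf : Tendsto f atTop (nhds 0))
    (ht : ∀ᶠ μ in atTop, |t μ| ≤ 1) :
    Tendsto (fun μ => K * (f μ * t μ)) atTop (nhds 0) := by
  have h : Tendsto (fun μ => f μ * t μ) atTop (nhds 0) := by
    refine squeeze_zero_norm' (a := fun μ => |f μ|) ?_ (by simpa using hf.abs)
    filter_upwards [ht] with μ h
    rw [Real.norm_eq_abs, abs_mul]
    exact mul_le_of_le_one_right (abs_nonneg _) h
  simpa using h.const_mul K

lemma exp_decay {d : ℝ} (hd : 0 < d) :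
    Tendsto (fun μ : ℝ => Real.exp (-(μ * d))) atTop (nhds 0) := by
  have h1 : Tendsto (fun μ : ℝ => -(μ * d)) atTop atBot :=
    tendsto_neg_atBot_iff.mpr (tendsto_id.atTop_mul_const hd)
  exact Real.tendsto_exp_atBot.comp h1

lemma invp (n : ℕ) (hn : n ≠ 0) : Tendsto (fun μ : ℝ => (μ^n)⁻¹) atTop (nhds 0) :=
  (tendsto_pow_atTop hn).inv_tendsto_atTop

lemma b_exp_mul {d : ℝ} (hd : 0 ≤ d) {t : ℝ → ℝ} (ht : ∀ x, |t x| ≤ 1) :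
    ∀ᶠ μ : ℝ in atTop, |Real.exp (-(μ * d)) * t μ| ≤ 1 := by
  filter_upwards [eventually_ge_atTop (0:ℝ)] with μ hμ
  rw [abs_mul, abs_of_pos (Real.exp_pos _)]
  have h1 : Real.exp (-(μ * d)) ≤ 1 := by
    rw [show (1:ℝ) = Real.exp 0 from (Real.exp_zero).symm]
    exact Real.exp_le_exp.mpr (neg_nonpos.mpr (mul_nonneg hμ hd))
  exact mul_le_one₀ h1 (abs_nonneg _) (ht μ)

/-- Simplified closed form of `Phi1` for `μ ≠ 0`. -/
noncomputable def gAux (E I ρ m κ l l₀ μ : ℝ) : ℝ :=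
  Real.exp (-(μ*(2*l))) * (Real.cos (μ*l) - Real.sin (μ*l) - Real.cos (μ*(l - 2*l₀)))
  + (Real.exp (-(μ*(2*l₀))) + Real.exp (-(μ*(2*(l - l₀))))) * Real.sin (μ*l)
  - 4*ρ/m * (μ⁻¹ * ((1 - Real.exp (-(μ*(2*l)))) * Real.sin (μ*l)))
  + κ*ρ/(E*I*m) * ((μ^4)⁻¹ *
      ((1 + Real.exp (-(μ*(2*l))) - Real.exp (-(μ*(2*l₀))) - Real.exp (-(μ*(2*(l - l₀))))) * Real.sin (μ*l)
        + (Real.cos (μ*l) - Real.cos (μ*(l - 2*l₀))) * (1 - Real.exp (-(μ*(2*l))))))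

/-- Explicit derivative of `gAux` (for `μ ≠ 0`). -/
noncomputable def gD (E I ρ m κ l l₀ μ : ℝ) : ℝ :=
  (-(2*l)) * (Real.exp (-(μ*(2*l))) * (Real.cos (μ*l)))
    + (2*l) * (Real.exp (-(μ*(2*l))) * (Real.sin (μ*l)))
    + (2*l) * (Real.exp (-(μ*(2*l))) * (Real.cos (μ*(l - 2*l₀))))
    + (-l) * (Real.exp (-(μ*(2*l))) * (Real.sin (μ*l)))
    + (-l) * (Real.exp (-(μ*(2*l))) * (Real.cos (μ*l)))
    + (l - 2*l₀) * (Real.exp (-(μ*(2*l))) * (Real.sin (μ*(l - 2*l₀))))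
    + (-(2*l₀)) * (Real.exp (-(μ*(2*l₀))) * (Real.sin (μ*l)))
    + (-(2*(l - l₀))) * (Real.exp (-(μ*(2*(l - l₀)))) * (Real.sin (μ*l)))
    + l * (Real.exp (-(μ*(2*l₀))) * (Real.cos (μ*l)))
    + l * (Real.exp (-(μ*(2*(l - l₀)))) * (Real.cos (μ*l)))
    + (4*ρ/m) * ((μ^2)⁻¹ * (Real.sin (μ*l)))
    + (-(4*ρ/m)) * ((μ^2)⁻¹ * (Real.exp (-(μ*(2*l))) * Real.sin (μ*l)))
    + (-(4*ρ/m*(2*l))) * (μ⁻¹ * (Real.exp (-(μ*(2*l))) * Real.sin (μ*l)))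
    + (-(4*ρ/m*l)) * (μ⁻¹ * (Real.cos (μ*l)))
    + (4*ρ/m*l) * (μ⁻¹ * (Real.exp (-(μ*(2*l))) * Real.cos (μ*l)))
    + (-(4*(κ*ρ/(E*I*m)))) * ((μ^5)⁻¹ * (Real.sin (μ*l)))
    + (-(4*(κ*ρ/(E*I*m)))) * ((μ^5)⁻¹ * (Real.exp (-(μ*(2*l))) * Real.sin (μ*l)))
    + (4*(κ*ρ/(E*I*m))) * ((μ^5)⁻¹ * (Real.exp (-(μ*(2*l₀))) * Real.sin (μ*l)))
    + (4*(κ*ρ/(E*I*m))) * ((μ^5)⁻¹ * (Real.exp (-(μ*(2*(l - l₀)))) * Real.sin (μ*l)))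
    + (-(4*(κ*ρ/(E*I*m)))) * ((μ^5)⁻¹ * (Real.cos (μ*l)))
    + (4*(κ*ρ/(E*I*m))) * ((μ^5)⁻¹ * (Real.cos (μ*(l - 2*l₀))))
    + (4*(κ*ρ/(E*I*m))) * ((μ^5)⁻¹ * (Real.exp (-(μ*(2*l))) * Real.cos (μ*l)))
    + (-(4*(κ*ρ/(E*I*m)))) * ((μ^5)⁻¹ * (Real.exp (-(μ*(2*l))) * Real.cos (μ*(l - 2*l₀))))
    + (-(κ*ρ/(E*I*m)*(2*l))) * ((μ^4)⁻¹ * (Real.exp (-(μ*(2*l))) * Real.sin (μ*l)))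
    + (κ*ρ/(E*I*m)*(2*l₀)) * ((μ^4)⁻¹ * (Real.exp (-(μ*(2*l₀))) * Real.sin (μ*l)))
    + (κ*ρ/(E*I*m)*(2*(l - l₀))) * ((μ^4)⁻¹ * (Real.exp (-(μ*(2*(l - l₀)))) * Real.sin (μ*l)))
    + (κ*ρ/(E*I*m)*l) * ((μ^4)⁻¹ * (Real.cos (μ*l)))
    + (κ*ρ/(E*I*m)*l) * ((μ^4)⁻¹ * (Real.exp (-(μ*(2*l))) * Real.cos (μ*l)))
    + (-(κ*ρ/(E*I*m)*l)) * ((μ^4)⁻¹ * (Real.exp (-(μ*(2*l₀))) * Real.cos (μ*l)))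
    + (-(κ*ρ/(E*I*m)*l)) * ((μ^4)⁻¹ * (Real.exp (-(μ*(2*(l - l₀)))) * Real.cos (μ*l)))
    + (-(κ*ρ/(E*I*m)*l)) * ((μ^4)⁻¹ * (Real.sin (μ*l)))
    + (κ*ρ/(E*I*m)*(l - 2*l₀)) * ((μ^4)⁻¹ * (Real.sin (μ*(l - 2*l₀))))
    + (κ*ρ/(E*I*m)*l) * ((μ^4)⁻¹ * (Real.exp (-(μ*(2*l))) * Real.sin (μ*l)))
    + (-(κ*ρ/(E*I*m)*(l - 2*l₀))) * ((μ^4)⁻¹ * (Real.exp (-(μ*(2*l))) * Real.sin (μ*(l - 2*l₀))))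
    + (2*(κ*ρ/(E*I*m))*l) * ((μ^4)⁻¹ * (Real.exp (-(μ*(2*l))) * Real.cos (μ*l)))
    + (-(2*(κ*ρ/(E*I*m))*l)) * ((μ^4)⁻¹ * (Real.exp (-(μ*(2*l))) * Real.cos (μ*(l - 2*l₀))))

set_option maxHeartbeats 2000000 in
lemma phi1_eq (E I ρ m κ l l₀ : ℝ) (hE : E ≠ 0) (hI : I ≠ 0) (hm : m ≠ 0)
    (μ : ℝ) (hμ : μ ≠ 0) :
    Phi1 E I ρ m κ l l₀ μ = gAux E I ρ m κ l l₀ μ := by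
  have hu : Real.exp (μ * l₀) ≠ 0 := (Real.exp_pos _).ne'
  have hv : Real.exp (μ * (l - l₀)) ≠ 0 := (Real.exp_pos _).ne'
  have e1 : Real.exp (μ * l) = Real.exp (μ * l₀) * Real.exp (μ * (l - l₀)) := by
    rw [← Real.exp_add]; congr 1; ring
  have e2 : Real.exp (-(μ * l)) = (Real.exp (μ * l₀) * Real.exp (μ * (l - l₀)))⁻¹ := by
    rw [Real.exp_neg, e1]
  have e3 : Real.exp (μ * (l - 2 * l₀)) = Real.exp (μ * (l - l₀)) * (Real.exp (μ * l₀))⁻¹ := by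
    rw [← Real.exp_neg, ← Real.exp_add]; congr 1; ring
  have e4 : Real.exp (-(μ * (l - 2 * l₀))) = Real.exp (μ * l₀) * (Real.exp (μ * (l - l₀)))⁻¹ := by
    rw [← Real.exp_neg, ← Real.exp_add]; congr 1; ring
  have e5 : Real.exp (-(μ*(2*l))) = ((Real.exp (μ * l₀))^2 * (Real.exp (μ * (l - l₀)))^2)⁻¹ := by
    rw [Real.exp_neg]; congr 1
    rw [show μ*(2*l) = (μ*l₀ + μ*l₀) + (μ*(l - l₀) + μ*(l - l₀)) by ring,
      Real.exp_add, Real.exp_add, Real.exp_add]; ring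
  have e6 : Real.exp (-(μ*(2*l₀))) = ((Real.exp (μ * l₀))^2)⁻¹ := by
    rw [Real.exp_neg]; congr 1
    rw [show μ*(2*l₀) = μ*l₀ + μ*l₀ by ring, Real.exp_add]; ring
  have e7 : Real.exp (-(μ*(2*(l - l₀)))) = ((Real.exp (μ * (l - l₀)))^2)⁻¹ := by
    rw [Real.exp_neg]; congr 1
    rw [show μ*(2*(l - l₀)) = μ*(l - l₀) + μ*(l - l₀) by ring, Real.exp_add]; ring
  unfold Phi1 gAux
  simp only [Real.sinh_eq, Real.cosh_eq]
  rw [e1, e2, e3, e4, e5, e6, e7]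
  field_simp
  ring

set_option maxHeartbeats 4000000 in
lemma hasDerivAt_gAux (E I ρ m κ l l₀ : ℝ) (hE : E ≠ 0) (hI : I ≠ 0) (hm : m ≠ 0)
    (μ : ℝ) (hμ : μ ≠ 0) :
    HasDerivAt (fun x => gAux E I ρ m κ l l₀ x) (gD E I ρ m κ l l₀ μ) μ := by
  have h_eL : HasDerivAt (fun x : ℝ => Real.exp (-(x*(2*l)))) (Real.exp (-(μ*(2*l))) * -(2*l)) μ :=
    ((hasDerivAt_mul_const (2*l)).neg).exp
  have h_eP : HasDerivAt (fun x : ℝ => Real.exp (-(x*(2*l₀)))) (Real.exp (-(μ*(2*l₀))) * -(2*l₀)) μ :=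
    ((hasDerivAt_mul_const (2*l₀)).neg).exp
  have h_eQ : HasDerivAt (fun x : ℝ => Real.exp (-(x*(2*(l - l₀)))))
      (Real.exp (-(μ*(2*(l - l₀)))) * -(2*(l - l₀))) μ :=
    ((hasDerivAt_mul_const (2*(l - l₀))).neg).exp
  have h_sb : HasDerivAt (fun x : ℝ => Real.sin (x*l)) (Real.cos (μ*l) * l) μ :=
    (hasDerivAt_mul_const l).sin
  have h_cb : HasDerivAt (fun x : ℝ => Real.cos (x*l)) (-Real.sin (μ*l) * l) μ :=
    (hasDerivAt_mul_const l).cos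
  have h_cc : HasDerivAt (fun x : ℝ => Real.cos (x*(l - 2*l₀))) (-Real.sin (μ*(l - 2*l₀)) * (l - 2*l₀)) μ :=
    (hasDerivAt_mul_const (l - 2*l₀)).cos
  have h_one : HasDerivAt (fun _ : ℝ => (1:ℝ)) 0 μ := hasDerivAt_const μ 1
  have h_T1 := h_eL.mul ((h_cb.sub h_sb).sub h_cc)
  have h_T2 := (h_eP.add h_eQ).mul h_sb
  have h_T3 := ((hasDerivAt_inv hμ).mul ((h_one.sub h_eL).mul h_sb)).const_mul (4*ρ/m)
  have h_inv4 : HasDerivAt (fun x : ℝ => (x^4)⁻¹) (-(↑(4:ℕ) * μ^(4-1)) / (μ^4)^2) μ :=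
    (hasDerivAt_pow 4 μ).inv (pow_ne_zero 4 hμ)
  have h_S := ((((h_one.add h_eL).sub h_eP).sub h_eQ).mul h_sb).add
    ((h_cb.sub h_cc).mul (h_one.sub h_eL))
  have h_T4 := (h_inv4.mul h_S).const_mul (κ*ρ/(E*I*m))
  have H := ((h_T1.add h_T2).sub h_T3).add h_T4
  have hfun : (fun x => gAux E I ρ m κ l l₀ x) =
      (fun x : ℝ => Real.exp (-(x*(2*l))) * (Real.cos (x*l) - Real.sin (x*l) - Real.cos (x*(l - 2*l₀)))
        + (Real.exp (-(x*(2*l₀))) + Real.exp (-(x*(2*(l - l₀))))) * Real.sin (x*l)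
        - 4*ρ/m * (x⁻¹ * ((1 - Real.exp (-(x*(2*l)))) * Real.sin (x*l)))
        + κ*ρ/(E*I*m) * ((x^4)⁻¹ *
            ((1 + Real.exp (-(x*(2*l))) - Real.exp (-(x*(2*l₀))) - Real.exp (-(x*(2*(l - l₀))))) * Real.sin (x*l)
              + (Real.cos (x*l) - Real.cos (x*(l - 2*l₀))) * (1 - Real.exp (-(x*(2*l))))))) := by
    funext x; rfl
  rw [hfun]
  refine H.congr_deriv ?_
  unfold gD
  simp only [Pi.add_apply, Pi.sub_apply, Pi.mul_apply, Nat.cast_ofNat]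
  generalize Real.exp (-(μ*(2*l))) = a
  generalize Real.exp (-(μ*(2*l₀))) = b
  generalize Real.exp (-(μ*(2*(l - l₀)))) = c
  generalize Real.sin (μ*l) = s1
  generalize Real.cos (μ*l) = c1
  generalize Real.sin (μ*(l - 2*l₀)) = s2
  generalize Real.cos (μ*(l - 2*l₀)) = c2
  field_simp
  ring

set_option maxHeartbeats 2000000 in
lemma tendsto_gD (E I ρ m κ l l₀ : ℝ) (hl : 0 < l) (hl₀ : 0 < l₀) (hl₀l : l₀ < l) :
    Filter.Tendsto (fun μ => gD E I ρ m κ l l₀ μ) Filter.atTop (nhds 0) := by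
  have h2l : (0:ℝ) < 2*l := by linarith
  have h2l0 : (0:ℝ) < 2*l₀ := by linarith
  have h2q : (0:ℝ) < 2*(l - l₀) := by linarith
  have inv1 : Tendsto (fun μ : ℝ => μ⁻¹) atTop (nhds 0) := tendsto_inv_atTop_zero
  unfold gD
  have h1 := atom_tendsto (-(2*l)) _ (fun μ : ℝ => Real.cos (μ*l)) (exp_decay h2l) (Filter.Eventually.of_forall (fun x => Real.abs_cos_le_one _))
  have h2 := atom_tendsto (2*l) _ (fun μ : ℝ => Real.sin (μ*l)) (exp_decay h2l) (Filter.Eventually.of_forall (fun x => Real.abs_sin_le_one _))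
  have h3 := atom_tendsto (2*l) _ (fun μ : ℝ => Real.cos (μ*(l - 2*l₀))) (exp_decay h2l) (Filter.Eventually.of_forall (fun x => Real.abs_cos_le_one _))
  have h4 := atom_tendsto (-l) _ (fun μ : ℝ => Real.sin (μ*l)) (exp_decay h2l) (Filter.Eventually.of_forall (fun x => Real.abs_sin_le_one _))
  have h5 := atom_tendsto (-l) _ (fun μ : ℝ => Real.cos (μ*l)) (exp_decay h2l) (Filter.Eventually.of_forall (fun x => Real.abs_cos_le_one _))
  have h6 := atom_tendsto (l - 2*l₀) _ (fun μ : ℝ => Real.sin (μ*(l - 2*l₀))) (exp_decay h2l) (Filter.Eventually.of_forall (fun x => Real.abs_sin_le_one _))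
  have h7 := atom_tendsto (-(2*l₀)) _ (fun μ : ℝ => Real.sin (μ*l)) (exp_decay h2l0) (Filter.Eventually.of_forall (fun x => Real.abs_sin_le_one _))
  have h8 := atom_tendsto (-(2*(l - l₀))) _ (fun μ : ℝ => Real.sin (μ*l)) (exp_decay h2q) (Filter.Eventually.of_forall (fun x => Real.abs_sin_le_one _))
  have h9 := atom_tendsto l _ (fun μ : ℝ => Real.cos (μ*l)) (exp_decay h2l0) (Filter.Eventually.of_forall (fun x => Real.abs_cos_le_one _))
  have h10 := atom_tendsto l _ (fun μ : ℝ => Real.cos (μ*l)) (exp_decay h2q) (Filter.Eventually.of_forall (fun x => Real.abs_cos_le_one _))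
  have h11 := atom_tendsto (4*ρ/m) _ (fun μ : ℝ => Real.sin (μ*l)) (invp 2 two_ne_zero) (Filter.Eventually.of_forall (fun x => Real.abs_sin_le_one _))
  have h12 := atom_tendsto (-(4*ρ/m)) _ (fun μ : ℝ => Real.exp (-(μ*(2*l))) * Real.sin (μ*l)) (invp 2 two_ne_zero) (b_exp_mul h2l.le (fun x => Real.abs_sin_le_one _))
  have h13 := atom_tendsto (-(4*ρ/m*(2*l))) _ (fun μ : ℝ => Real.exp (-(μ*(2*l))) * Real.sin (μ*l)) inv1 (b_exp_mul h2l.le (fun x => Real.abs_sin_le_one _))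
  have h14 := atom_tendsto (-(4*ρ/m*l)) _ (fun μ : ℝ => Real.cos (μ*l)) inv1 (Filter.Eventually.of_forall (fun x => Real.abs_cos_le_one _))
  have h15 := atom_tendsto (4*ρ/m*l) _ (fun μ : ℝ => Real.exp (-(μ*(2*l))) * Real.cos (μ*l)) inv1 (b_exp_mul h2l.le (fun x => Real.abs_cos_le_one _))
  have h16 := atom_tendsto (-(4*(κ*ρ/(E*I*m)))) _ (fun μ : ℝ => Real.sin (μ*l)) (invp 5 (by norm_num)) (Filter.Eventually.of_forall (fun x => Real.abs_sin_le_one _))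
  have h17 := atom_tendsto (-(4*(κ*ρ/(E*I*m)))) _ (fun μ : ℝ => Real.exp (-(μ*(2*l))) * Real.sin (μ*l)) (invp 5 (by norm_num)) (b_exp_mul h2l.le (fun x => Real.abs_sin_le_one _))
  have h18 := atom_tendsto (4*(κ*ρ/(E*I*m))) _ (fun μ : ℝ => Real.exp (-(μ*(2*l₀))) * Real.sin (μ*l)) (invp 5 (by norm_num)) (b_exp_mul h2l0.le (fun x => Real.abs_sin_le_one _))
  have h19 := atom_tendsto (4*(κ*ρ/(E*I*m))) _ (fun μ : ℝ => Real.exp (-(μ*(2*(l - l₀)))) * Real.sin (μ*l)) (invp 5 (by norm_num)) (b_exp_mul h2q.le (fun x => Real.abs_sin_le_one _))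
  have h20 := atom_tendsto (-(4*(κ*ρ/(E*I*m)))) _ (fun μ : ℝ => Real.cos (μ*l)) (invp 5 (by norm_num)) (Filter.Eventually.of_forall (fun x => Real.abs_cos_le_one _))
  have h21 := atom_tendsto (4*(κ*ρ/(E*I*m))) _ (fun μ : ℝ => Real.cos (μ*(l - 2*l₀))) (invp 5 (by norm_num)) (Filter.Eventually.of_forall (fun x => Real.abs_cos_le_one _))
  have h22 := atom_tendsto (4*(κ*ρ/(E*I*m))) _ (fun μ : ℝ => Real.exp (-(μ*(2*l))) * Real.cos (μ*l)) (invp 5 (by norm_num)) (b_exp_mul h2l.le (fun x => Real.abs_cos_le_one _))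
  have h23 := atom_tendsto (-(4*(κ*ρ/(E*I*m)))) _ (fun μ : ℝ => Real.exp (-(μ*(2*l))) * Real.cos (μ*(l - 2*l₀))) (invp 5 (by norm_num)) (b_exp_mul h2l.le (fun x => Real.abs_cos_le_one _))
  have h24 := atom_tendsto (-(κ*ρ/(E*I*m)*(2*l))) _ (fun μ : ℝ => Real.exp (-(μ*(2*l))) * Real.sin (μ*l)) (invp 4 (by norm_num)) (b_exp_mul h2l.le (fun x => Real.abs_sin_le_one _))
  have h25 := atom_tendsto (κ*ρ/(E*I*m)*(2*l₀)) _ (fun μ : ℝ => Real.exp (-(μ*(2*l₀))) * Real.sin (μ*l)) (invp 4 (by norm_num)) (b_exp_mul h2l0.le (fun x => Real.abs_sin_le_one _))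
  have h26 := atom_tendsto (κ*ρ/(E*I*m)*(2*(l - l₀))) _ (fun μ : ℝ => Real.exp (-(μ*(2*(l - l₀)))) * Real.sin (μ*l)) (invp 4 (by norm_num)) (b_exp_mul h2q.le (fun x => Real.abs_sin_le_one _))
  have h27 := atom_tendsto (κ*ρ/(E*I*m)*l) _ (fun μ : ℝ => Real.cos (μ*l)) (invp 4 (by norm_num)) (Filter.Eventually.of_forall (fun x => Real.abs_cos_le_one _))
  have h28 := atom_tendsto (κ*ρ/(E*I*m)*l) _ (fun μ : ℝ => Real.exp (-(μ*(2*l))) * Real.cos (μ*l)) (invp 4 (by norm_num)) (b_exp_mul h2l.le (fun x => Real.abs_cos_le_one _))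
  have h29 := atom_tendsto (-(κ*ρ/(E*I*m)*l)) _ (fun μ : ℝ => Real.exp (-(μ*(2*l₀))) * Real.cos (μ*l)) (invp 4 (by norm_num)) (b_exp_mul h2l0.le (fun x => Real.abs_cos_le_one _))
  have h30 := atom_tendsto (-(κ*ρ/(E*I*m)*l)) _ (fun μ : ℝ => Real.exp (-(μ*(2*(l - l₀)))) * Real.cos (μ*l)) (invp 4 (by norm_num)) (b_exp_mul h2q.le (fun x => Real.abs_cos_le_one _))
  have h31 := atom_tendsto (-(κ*ρ/(E*I*m)*l)) _ (fun μ : ℝ => Real.sin (μ*l)) (invp 4 (by norm_num)) (Filter.Eventually.of_forall (fun x => Real.abs_sin_le_one _))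
  have h32 := atom_tendsto (κ*ρ/(E*I*m)*(l - 2*l₀)) _ (fun μ : ℝ => Real.sin (μ*(l - 2*l₀))) (invp 4 (by norm_num)) (Filter.Eventually.of_forall (fun x => Real.abs_sin_le_one _))
  have h33 := atom_tendsto (κ*ρ/(E*I*m)*l) _ (fun μ : ℝ => Real.exp (-(μ*(2*l))) * Real.sin (μ*l)) (invp 4 (by norm_num)) (b_exp_mul h2l.le (fun x => Real.abs_sin_le_one _))
  have h34 := atom_tendsto (-(κ*ρ/(E*I*m)*(l - 2*l₀))) _ (fun μ : ℝ => Real.exp (-(μ*(2*l))) * Real.sin (μ*(l - 2*l₀))) (invp 4 (by norm_num)) (b_exp_mul h2l.le (fun x => Real.abs_sin_le_one _))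
  have h35 := atom_tendsto (2*(κ*ρ/(E*I*m))*l) _ (fun μ : ℝ => Real.exp (-(μ*(2*l))) * Real.cos (μ*l)) (invp 4 (by norm_num)) (b_exp_mul h2l.le (fun x => Real.abs_cos_le_one _))
  have h36 := atom_tendsto (-(2*(κ*ρ/(E*I*m))*l)) _ (fun μ : ℝ => Real.exp (-(μ*(2*l))) * Real.cos (μ*(l - 2*l₀))) (invp 4 (by norm_num)) (b_exp_mul h2l.le (fun x => Real.abs_cos_le_one _))
  simpa using (((((((((((((((((((((((((((((((((((h1.add h2).add h3).add h4).add h5).add h6).add h7).add h8).add h9).add h10).add h11).add h12).add h13).add h14).add h15).add h16).add h17).add h18).add h19).add h20).add h21).add h22).add h23).add h24).add h25).add h26).add h27).add h28).add h29).add h30).add h31).add h32).add h33).add h34).add h35).add h36)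

/-- `Φ₁'(μ) → 0` as `μ → +∞`. -/
theorem deriv_Phi1_tendsto_zero
    (E I ρ m κ l l₀ : ℝ)
    (hE : 0 < E) (hI : 0 < I) (hρ : 0 < ρ) (hm : 0 < m) (hκ : 0 < κ)
    (hl : 0 < l) (hl₀ : 0 < l₀) (hl₀l : l₀ < l) :
    Filter.Tendsto (deriv (Phi1 E I ρ m κ l l₀)) Filter.atTop (nhds 0) := by
  have hEv : deriv (Phi1 E I ρ m κ l l₀) =ᶠ[atTop] fun μ => gD E I ρ m κ l l₀ μ := by
    filter_upwards [eventually_gt_atTop (0:ℝ)] with μ hμ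
    have heq : Phi1 E I ρ m κ l l₀ =ᶠ[nhds μ] gAux E I ρ m κ l l₀ := by
      filter_upwards [isOpen_Ioi.mem_nhds (show μ ∈ Set.Ioi (0:ℝ) from hμ)] with x hx
      exact phi1_eq E I ρ m κ l l₀ hE.ne' hI.ne' hm.ne' x (ne_of_gt hx)
    rw [heq.deriv_eq]
    exact (hasDerivAt_gAux E I ρ m κ l l₀ hE.ne' hI.ne' hm.ne' μ (ne_of_gt hμ)).deriv
  exact (tendsto_gD E I ρ m κ l l₀ hl hl₀ hl₀l).congr' hEv.symm
end
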